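/- arXiv:2503.03079 — 8 statements merged into one kernel-verified Lean document; each statement's English description precedes it below -/
import Mathlib

section
/- Let C = {c₁, …, cₙ} ⊆ ℝ^d be a set of n ≥ 2 points, not all equal. For each coordinate b ∈ [d], let p^(b) = max over pairs i ≠ j with cᵢ ≠ cⱼ of |cᵢ^(b) − cⱼ^(b)| / ‖cᵢ − cⱼ‖₁. Then 1 ≤ Σ_{b ∈ [d]} p^(b) ≤ n. -/
/-!
Weight the edges of the complete graph on the points by their `ℓ₁`-lengths and take a connected
set `E` of at most `n - 1` edges of minimum total weight. An exchange argument shows that any two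
points `cᵢ`, `cⱼ` are joined in `E` by a path of edges no longer than `‖cᵢ - cⱼ‖₁`. Telescoping
coordinate `b` along that path gives `|cᵢᵇ - cⱼᵇ| / ‖cᵢ - cⱼ‖₁ ≤ ∑_{e ∈ E} |Δₑᵇ| / ‖Δₑ‖₁`,
and summing over `b` bounds `∑ p⁽ᵇ⁾` by `#E ≤ n - 1`. For the lower bound, the ratios of a
single pair already sum to `1` over the coordinates.
-/

open Finset SimpleGraph

variable {V α : Type*} [SeminormedAddCommGroup α]

def edgeLength (g : V → α) : Sym2 V → ℝ :=
  Sym2.lift ⟨fun x y => ‖g x - g y‖, fun _ _ => norm_sub_rev _ _⟩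

@[simp]
theorem edgeLength_mk (g : V → α) (x y : V) : edgeLength g s(x, y) = ‖g x - g y‖ := rfl

theorem edgeLength_nonneg (g : V → α) (e : Sym2 V) : 0 ≤ edgeLength g e := by
  induction e using Sym2.ind with | h x y => exact norm_nonneg (g x - g y)

theorem SimpleGraph.Walk.norm_sub_le_sum_edgeLength (g : V → α) {G : SimpleGraph V}
    {u v : V} (p : G.Walk u v) : ‖g u - g v‖ ≤ (p.edges.map (edgeLength g)).sum := by
  induction p with
  | nil => simp
  | cons _ p ih =>
    simp only [Walk.edges_cons, List.map_cons, List.sum_cons, edgeLength_mk]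
    exact (norm_sub_le_norm_sub_add_norm_sub _ _ _).trans (by gcongr)

theorem SimpleGraph.Reachable.norm_sub_le_sum_edgeLength (g : V → α)
    {G : SimpleGraph V} {F : Finset (Sym2 V)} (hF : G.edgeSet ⊆ F) {u v : V}
    (h : G.Reachable u v) : ‖g u - g v‖ ≤ ∑ e ∈ F, edgeLength g e := by
  classical
  obtain ⟨p, hp⟩ := h.exists_isPath
  calc ‖g u - g v‖ ≤ (p.edges.map (edgeLength g)).sum := p.norm_sub_le_sum_edgeLength g
    _ = ∑ e ∈ p.edges.toFinset, edgeLength g e :=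
      (List.sum_toFinset _ hp.isTrail.edges_nodup).symm
    _ ≤ ∑ e ∈ F, edgeLength g e :=
      sum_le_sum_of_subset_of_nonneg
        (fun e he => hF (p.edges_subset_edgeSet (List.mem_toFinset.1 he)))
        fun e _ _ => edgeLength_nonneg g e

theorem SimpleGraph.Connected.connected_sup_edge_deleteEdges {G : SimpleGraph V}
    (hG : G.Connected) {u v : V} (hne : u ≠ v) (huv : ¬ G.Adj u v) {p : G.Walk u v}
    (hp : p.IsPath) {e : Sym2 V} (he : e ∈ p.edges) :
    ((G ⊔ edge u v).deleteEdges {e}).Connected := by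
  have hadj : (G ⊔ edge u v).Adj v u := Or.inr (by simp [edge_adj, hne.symm])
  let q := p.transfer (G ⊔ edge u v) fun _ he' =>
    edgeSet_mono le_sup_left (p.edges_subset_edgeSet he')
  have hcycle : (Walk.cons hadj q).IsCycle := by
    refine (Walk.cons_isCycle_iff q hadj).2 ⟨hp.transfer _, ?_⟩
    rw [Walk.edges_transfer, Sym2.eq_swap]
    exact fun h => huv (p.adj_of_mem_edges h)
  obtain ⟨x, y⟩ := e
  exact (hG.mono le_sup_left).connected_delete_edge_of_not_isBridge fun hb =>
    hb.notMem_edges_of_isCycle hcycle (by simp [q, he])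

theorem SimpleGraph.fromEdgeSet_insert_erase [DecidableEq V] (E : Finset (Sym2 V)) {u v : V}
    {e : Sym2 V} (he : e ≠ s(u, v)) :
    fromEdgeSet ↑(insert s(u, v) (E.erase e)) = (fromEdgeSet ↑E ⊔ edge u v).deleteEdges {e} := by
  ext a b
  have hab : a = u ∧ b = v ∨ a = v ∧ b = u → s(a, b) ≠ e := by
    rintro (⟨rfl, rfl⟩ | ⟨rfl, rfl⟩)
    · exact he.symm
    · rwa [Sym2.eq_swap, ne_comm]
  simp only [fromEdgeSet_adj, deleteEdges_adj, sup_adj, edge_adj, coe_insert, coe_erase,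
    Set.mem_insert_iff, Set.mem_sdiff, Set.mem_singleton_iff, Finset.mem_coe, Sym2.eq_iff]
  tauto

/-- `E` joins any two vertices `u`, `v` by a path whose edges all weigh at most `w s(u, v)`. -/
def IsMinimaxSpanning (w : Sym2 V → ℝ) (E : Finset (Sym2 V)) : Prop :=
  ∀ u v, ((fromEdgeSet ↑E).deleteEdges {e | w s(u, v) < w e}).Reachable u v

/-- Exchange argument: if the path in `E` from `u` to `v` had an edge heavier than `s(u, v)`,
trading that edge for `s(u, v)` would keep `E` connected and make it lighter. -/
theorem isMinimaxSpanning_of_forall_le (w : Sym2 V → ℝ) {E : Finset (Sym2 V)}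
    (hE : (fromEdgeSet (E : Set (Sym2 V))).Connected)
    (hmin : ∀ E' : Finset (Sym2 V), (fromEdgeSet (E' : Set (Sym2 V))).Connected →
      #E' ≤ #E → ∑ e ∈ E, w e ≤ ∑ e ∈ E', w e) :
    IsMinimaxSpanning w E := by
  classical
  intro u v
  by_contra h
  have hne : u ≠ v := by rintro rfl; exact h (Reachable.refl u)
  have huv : s(u, v) ∉ E := fun huv => h <| Adj.reachable <|
    deleteEdges_adj.2 ⟨(fromEdgeSet_adj _).2 ⟨huv, hne⟩, lt_irrefl (w s(u, v))⟩
  obtain ⟨p, hp⟩ := hE.exists_isPath u v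
  obtain ⟨e, he_heavy : w s(u, v) < w e, hep⟩ := p.exists_mem_edges_of_not_reachable_deleteEdges h
  have heE : e ∈ E := by
    have := p.edges_subset_edgeSet hep
    rw [edgeSet_fromEdgeSet] at this
    exact this.1
  have he : e ≠ s(u, v) := by rintro rfl; exact huv heE
  have hconn := hE.connected_sup_edge_deleteEdges hne
    (fun hadj => huv ((fromEdgeSet_adj _).1 hadj).1) hp hep
  rw [← fromEdgeSet_insert_erase E he] at hconn
  have hcard : #(insert s(u, v) (E.erase e)) ≤ #E :=
    (card_insert_le _ _).trans (card_erase_add_one heE).le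
  have hlighter := hmin _ hconn hcard
  rw [sum_insert (fun h => huv (mem_of_mem_erase h)), ← add_sum_erase E w heE] at hlighter
  linarith

theorem exists_isMinimaxSpanning [Fintype V] (w : Sym2 V → ℝ) :
    ∃ E : Finset (Sym2 V), #E ≤ Fintype.card V - 1 ∧ IsMinimaxSpanning w E := by
  classical
  cases isEmpty_or_nonempty V
  · exact ⟨∅, by simp, fun u => isEmptyElim u⟩
  obtain ⟨T, -, hT⟩ := (connected_top (V := V)).exists_isTree_le
  set S := {E : Finset (Sym2 V) | (fromEdgeSet (E : Set (Sym2 V))).Connected ∧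
    #E ≤ Fintype.card V - 1}
  have hTS : T.edgeFinset ∈ S := by
    refine ⟨by simpa using hT.1, ?_⟩
    have := hT.card_edgeFinset
    omega
  obtain ⟨E, ⟨hE, hcard⟩, hmin⟩ := S.exists_min_image (fun E => ∑ e ∈ E, w e) S.toFinite ⟨_, hTS⟩
  exact ⟨E, hcard, isMinimaxSpanning_of_forall_le w hE fun E' hE' hE'card =>
    hmin E' ⟨hE', hE'card.trans hcard⟩⟩

section L1

variable {ι κ : Type*} [Fintype κ] (c : ι → κ → ℝ)

def l1Length (e : Sym2 ι) : ℝ := ∑ b, edgeLength (fun i => c i b) e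

/-- Equal to `0` on edges of `ℓ₁`-length `0`, since `x / 0 = 0`. -/
noncomputable def coordRatio (b : κ) (e : Sym2 ι) : ℝ :=
  edgeLength (fun i => c i b) e / l1Length c e

@[simp]
theorem l1Length_mk (i j : ι) : l1Length c s(i, j) = ∑ b, |c i b - c j b| := by
  simp [l1Length, Real.norm_eq_abs]

theorem l1Length_nonneg (e : Sym2 ι) : 0 ≤ l1Length c e :=
  sum_nonneg fun _ _ => edgeLength_nonneg _ e

theorem l1Length_mk_ne_zero {i j : ι} (h : c i ≠ c j) : l1Length c s(i, j) ≠ 0 := by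
  obtain ⟨b, hb⟩ := Function.ne_iff.1 h
  rw [l1Length_mk]
  exact (sum_pos' (fun _ _ => abs_nonneg _) ⟨b, mem_univ b, abs_pos.2 (sub_ne_zero.2 hb)⟩).ne'

theorem coordRatio_nonneg (b : κ) (e : Sym2 ι) : 0 ≤ coordRatio c b e :=
  div_nonneg (edgeLength_nonneg _ e) (l1Length_nonneg c e)

theorem sum_coordRatio_le_one (e : Sym2 ι) : ∑ b, coordRatio c b e ≤ 1 := by
  simp only [coordRatio, ← sum_div]
  exact div_self_le_one _

theorem sum_coordRatio_eq_one {e : Sym2 ι} (he : l1Length c e ≠ 0) :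
    ∑ b, coordRatio c b e = 1 := by
  simp only [coordRatio, ← sum_div]
  exact div_self he

theorem edgeLength_div_le_coordRatio {D : ℝ} {e : Sym2 ι} (he : l1Length c e ≤ D) (b : κ) :
    edgeLength (fun i => c i b) e / D ≤ coordRatio c b e := by
  have hb : edgeLength (fun i => c i b) e ≤ l1Length c e :=
    single_le_sum (fun b _ => edgeLength_nonneg (fun i => c i b) e) (mem_univ b)
  rcases (l1Length_nonneg c e).eq_or_lt with h0 | hpos
  · simp [le_antisymm (h0 ▸ hb) (edgeLength_nonneg _ e), coordRatio_nonneg]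
  · exact div_le_div_of_nonneg_left (edgeLength_nonneg _ e) hpos he

theorem coordRatio_le_sum_of_isMinimaxSpanning {E : Finset (Sym2 ι)}
    (hE : IsMinimaxSpanning (l1Length c) E) (i j : ι) (b : κ) :
    coordRatio c b s(i, j) ≤ ∑ e ∈ E, coordRatio c b e := by
  classical
  set D := l1Length c s(i, j)
  have hF : ((fromEdgeSet ↑E).deleteEdges {e | D < l1Length c e}).edgeSet ⊆
      ↑(E.filter (l1Length c · ≤ D)) := by
    intro e he
    simp only [edgeSet_deleteEdges, edgeSet_fromEdgeSet] at he
    exact mem_filter.2 ⟨he.1.1, not_lt.1 he.2⟩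
  calc coordRatio c b s(i, j)
      ≤ (∑ e ∈ E.filter (l1Length c · ≤ D), edgeLength (fun i => c i b) e) / D :=
        div_le_div_of_nonneg_right ((hE i j).norm_sub_le_sum_edgeLength (fun i => c i b) hF)
          (l1Length_nonneg c _)
    _ = ∑ e ∈ E.filter (l1Length c · ≤ D), edgeLength (fun i => c i b) e / D := sum_div ..
    _ ≤ ∑ e ∈ E.filter (l1Length c · ≤ D), coordRatio c b e :=
        sum_le_sum fun e he => edgeLength_div_le_coordRatio c (mem_filter.1 he).2 b
    _ ≤ ∑ e ∈ E, coordRatio c b e :=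
        sum_le_sum_of_subset_of_nonneg (filter_subset _ _) fun e _ _ => coordRatio_nonneg c b e

end L1

theorem sum_max_ratio_l1_bounds_general (n d : ℕ) (c : Fin n → Fin d → ℝ)
    (hne : ∃ i j : Fin n, c i ≠ c j) :
    1 ≤ (∑ b : Fin d, sSup {v : ℝ | ∃ i j : Fin n, c i ≠ c j ∧
          v = |c i b - c j b| / ∑ b' : Fin d, |c i b' - c j b'|}) ∧
    (∑ b : Fin d, sSup {v : ℝ | ∃ i j : Fin n, c i ≠ c j ∧
          v = |c i b - c j b| / ∑ b' : Fin d, |c i b' - c j b'|}) ≤ n := by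
  obtain ⟨E, hcard, hE⟩ := exists_isMinimaxSpanning (l1Length c)
  set S : Fin d → Set ℝ := fun b => {v : ℝ | ∃ i j : Fin n, c i ≠ c j ∧
    v = |c i b - c j b| / ∑ b' : Fin d, |c i b' - c j b'|}
  have hS : ∀ b, ∀ v ∈ S b, v ≤ ∑ e ∈ E, coordRatio c b e := by
    rintro b v ⟨i, j, -, rfl⟩
    simpa [coordRatio, Real.norm_eq_abs] using coordRatio_le_sum_of_isMinimaxSpanning c hE i j b
  obtain ⟨i, j, hij⟩ := hne
  have hmem : ∀ b, coordRatio c b s(i, j) ∈ S b := fun b =>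
    ⟨i, j, hij, by simp [coordRatio, Real.norm_eq_abs]⟩
  constructor
  · calc (1 : ℝ) = ∑ b, coordRatio c b s(i, j) :=
          (sum_coordRatio_eq_one c (l1Length_mk_ne_zero c hij)).symm
      _ ≤ ∑ b, sSup (S b) := sum_le_sum fun b _ => le_csSup ⟨_, hS b⟩ (hmem b)
  · calc ∑ b, sSup (S b) ≤ ∑ b, ∑ e ∈ E, coordRatio c b e :=
          sum_le_sum fun b _ => csSup_le ⟨_, hmem b⟩ (hS b)
      _ = ∑ e ∈ E, ∑ b, coordRatio c b e := sum_comm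
      _ ≤ ∑ e ∈ E, 1 := sum_le_sum fun e _ => sum_coordRatio_le_one c e
      _ ≤ n := by
        rw [sum_const, nsmul_one]
        exact_mod_cast hcard.trans (by simp)

theorem sum_max_ratio_l1_bounds (n d : ℕ) (hn : 2 ≤ n) (c : Fin n → Fin d → ℝ)
    (hne : ∃ i j : Fin n, c i ≠ c j) :
    1 ≤ (∑ b : Fin d, sSup {v : ℝ | ∃ i j : Fin n, c i ≠ c j ∧
          v = |c i b - c j b| / ∑ b' : Fin d, |c i b' - c j b'|}) ∧
    (∑ b : Fin d, sSup {v : ℝ | ∃ i j : Fin n, c i ≠ c j ∧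
          v = |c i b - c j b| / ∑ b' : Fin d, |c i b' - c j b'|}) ≤ n :=
  sum_max_ratio_l1_bounds_general n d c hne
end

section
/- Let C = {c₁, …, cₙ} ⊆ ℝ^d be a set of n distinct points and let (c_{i₀}, c_{j₀}) be a closest pair in ℓ₁-distance. Define Pₙ(C) = Σ_{b ∈ [d]} max_{i ≠ j} |cᵢ^(b) − cⱼ^(b)| / ‖cᵢ − cⱼ‖₁. Let C' = {collapse_{c_{i₀}, c_{j₀}}(cᵢ) : i ∈ [n]}, where collapse is applied coordinatewise with thresholds c_{i₀}^(b), c_{j₀}^(b). Then C' contains at most n − 1 distinct points and Pₙ(C) ≤ P_{n−1}(C') + 1. -/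
open Finset

/-- Coordinatewise collapse with thresholds `τ₁ τ₂` (swapped if needed). -/
noncomputable def collapse (τ₁ τ₂ x : ℝ) : ℝ :=
  if x ≤ min τ₁ τ₂ then x else if x ≤ max τ₁ τ₂ then min τ₁ τ₂ else x - |τ₂ - τ₁|

/-- ℓ₁ distance on `Fin d → ℝ`. -/
noncomputable def l1dist {d : ℕ} (x y : Fin d → ℝ) : ℝ := ∑ b, |x b - y b|

/-- `P(S) = Σ_b max over distinct pairs of |x_b − y_b| / ‖x − y‖₁`. -/
noncomputable def Pfun {d : ℕ} (S : Finset (Fin d → ℝ)) : ℝ :=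
  ∑ b : Fin d, sSup {v : ℝ | ∃ x ∈ S, ∃ y ∈ S, x ≠ y ∧ v = |x b - y b| / l1dist x y}

lemma collapse_bounds (τ₁ τ₂ : ℝ) {a b : ℝ} (hab : a ≤ b) :
    0 ≤ collapse τ₁ τ₂ b - collapse τ₁ τ₂ a ∧
      collapse τ₁ τ₂ b - collapse τ₁ τ₂ a ≤ b - a ∧
      b - a - |τ₂ - τ₁| ≤ collapse τ₁ τ₂ b - collapse τ₁ τ₂ a := by
  have h1 : min τ₁ τ₂ ≤ max τ₁ τ₂ := min_le_max
  have h2 : |τ₂ - τ₁| = max τ₁ τ₂ - min τ₁ τ₂ := by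
    rw [abs_sub_comm, ← max_sub_min_eq_abs, max_comm, min_comm]
  unfold collapse
  split_ifs <;> exact ⟨by linarith, by linarith, by linarith⟩

lemma collapse_lip (τ₁ τ₂ a b : ℝ) :
    |collapse τ₁ τ₂ a - collapse τ₁ τ₂ b| ≤ |a - b| := by
  rcases le_total a b with h | h
  · obtain ⟨h0, h1, _⟩ := collapse_bounds τ₁ τ₂ h
    rw [abs_sub_comm a b, abs_of_nonneg (by linarith : (0:ℝ) ≤ b - a), abs_le]
    constructor <;> linarith
  · obtain ⟨h0, h1, _⟩ := collapse_bounds τ₁ τ₂ h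
    rw [abs_of_nonneg (by linarith : (0:ℝ) ≤ a - b), abs_le]
    constructor <;> linarith

lemma collapse_lower (τ₁ τ₂ a b : ℝ) :
    |a - b| ≤ |collapse τ₁ τ₂ a - collapse τ₁ τ₂ b| + |τ₂ - τ₁| := by
  rcases le_total a b with h | h
  · obtain ⟨h0, _, h2⟩ := collapse_bounds τ₁ τ₂ h
    rw [abs_sub_comm a b, abs_of_nonneg (by linarith : (0:ℝ) ≤ b - a),
      abs_sub_comm, abs_of_nonneg h0]
    linarith
  · obtain ⟨h0, _, h2⟩ := collapse_bounds τ₁ τ₂ h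
    rw [abs_of_nonneg (by linarith : (0:ℝ) ≤ a - b), abs_of_nonneg h0]
    linarith

lemma collapse_left (τ₁ τ₂ : ℝ) : collapse τ₁ τ₂ τ₁ = min τ₁ τ₂ := by
  unfold collapse
  split_ifs with h1 h2
  · exact le_antisymm h1 (min_le_left _ _)
  · rfl
  · exact absurd (le_max_left τ₁ τ₂) h2

lemma collapse_right (τ₁ τ₂ : ℝ) : collapse τ₁ τ₂ τ₂ = min τ₁ τ₂ := by
  unfold collapse
  split_ifs with h1 h2
  · exact le_antisymm h1 (min_le_right _ _)
  · rfl
  · exact absurd (le_max_right τ₁ τ₂) h2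

lemma l1dist_nonneg {d : ℕ} (x y : Fin d → ℝ) : 0 ≤ l1dist x y :=
  Finset.sum_nonneg fun _ _ => abs_nonneg _

lemma coord_le_l1 {d : ℕ} (x y : Fin d → ℝ) (b : Fin d) :
    |x b - y b| ≤ l1dist x y := by
  unfold l1dist
  exact Finset.single_le_sum (f := fun b' => |x b' - y b'|) (fun _ _ => abs_nonneg _) (mem_univ b)

lemma l1dist_pos {d : ℕ} {x y : Fin d → ℝ} (h : x ≠ y) : 0 < l1dist x y := by
  obtain ⟨b, hb⟩ := Function.ne_iff.mp h
  have : 0 < |x b - y b| := abs_pos.mpr (sub_ne_zero.mpr hb)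
  exact lt_of_lt_of_le this (coord_le_l1 x y b)

lemma ratio_mem {d : ℕ} {T : Finset (Fin d → ℝ)} {b : Fin d} {v : ℝ}
    (hv : v ∈ {v : ℝ | ∃ x ∈ T, ∃ y ∈ T, x ≠ y ∧ v = |x b - y b| / l1dist x y}) :
    0 ≤ v ∧ v ≤ 1 := by
  obtain ⟨x, _, y, _, hxy, rfl⟩ := hv
  have hL : 0 < l1dist x y := l1dist_pos hxy
  exact ⟨div_nonneg (abs_nonneg _) hL.le, (div_le_one hL).mpr (coord_le_l1 x y b)⟩

theorem collapse_recursion (n d : ℕ) (c : Fin n → Fin d → ℝ)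
    (hinj : Function.Injective c) (i₀ j₀ : Fin n) (hij : i₀ ≠ j₀)
    (hclosest : ∀ i j : Fin n, i ≠ j → l1dist (c i₀) (c j₀) ≤ l1dist (c i) (c j)) :
    let C' : Finset (Fin d → ℝ) :=
      Finset.univ.image (fun i : Fin n => fun b : Fin d => collapse (c i₀ b) (c j₀ b) (c i b))
    C'.card ≤ n - 1 ∧ Pfun (Finset.univ.image c) ≤ Pfun C' + 1 := by
  intro C'
  set g : Fin n → (Fin d → ℝ) :=
    fun i b => collapse (c i₀ b) (c j₀ b) (c i b) with hg
  have hgij : g i₀ = g j₀ := by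
    funext b
    simp only [hg, collapse_left, collapse_right]
  have hD : 0 < l1dist (c i₀) (c j₀) :=
    l1dist_pos (fun h => hij (hinj h))
  constructor
  · -- cardinality
    have hsub : C' ⊆ (univ.erase i₀).image g := by
      intro x hx
      simp only [C', mem_image, mem_univ, true_and] at hx
      obtain ⟨i, rfl⟩ := hx
      rcases eq_or_ne i i₀ with rfl | hne
      · exact mem_image.mpr ⟨j₀, mem_erase.mpr ⟨hij.symm, mem_univ _⟩, hgij.symm⟩
      · exact mem_image.mpr ⟨i, mem_erase.mpr ⟨hne, mem_univ _⟩, rfl⟩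
    calc C'.card ≤ ((univ.erase i₀).image g).card := card_le_card hsub
      _ ≤ (univ.erase i₀).card := card_image_le
      _ = n - 1 := by rw [card_erase_of_mem (mem_univ i₀), card_univ, Fintype.card_fin]
  · -- Pfun inequality
    set D := l1dist (c i₀) (c j₀) with hDdef
    have key : ∀ b : Fin d,
        sSup {v : ℝ | ∃ x ∈ univ.image c, ∃ y ∈ univ.image c,
            x ≠ y ∧ v = |x b - y b| / l1dist x y}
          ≤ sSup {v : ℝ | ∃ x ∈ C', ∃ y ∈ C',
            x ≠ y ∧ v = |x b - y b| / l1dist x y} + |c i₀ b - c j₀ b| / D := by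
      intro b
      have hbdd : BddAbove {v : ℝ | ∃ x ∈ C', ∃ y ∈ C',
          x ≠ y ∧ v = |x b - y b| / l1dist x y} :=
        ⟨1, fun v hv => (ratio_mem hv).2⟩
      have hsup0 : 0 ≤ sSup {v : ℝ | ∃ x ∈ C', ∃ y ∈ C',
          x ≠ y ∧ v = |x b - y b| / l1dist x y} :=
        Real.sSup_nonneg fun v hv => (ratio_mem hv).1
      have hne : {v : ℝ | ∃ x ∈ univ.image c, ∃ y ∈ univ.image c,
          x ≠ y ∧ v = |x b - y b| / l1dist x y}.Nonempty := by
        refine ⟨|c i₀ b - c j₀ b| / l1dist (c i₀) (c j₀),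
          c i₀, mem_image.mpr ⟨i₀, mem_univ _, rfl⟩,
          c j₀, mem_image.mpr ⟨j₀, mem_univ _, rfl⟩,
          fun h => hij (hinj h), rfl⟩
      refine csSup_le hne ?_
      rintro v ⟨x, hx, y, hy, hxy, rfl⟩
      obtain ⟨i, -, rfl⟩ := mem_image.mp hx
      obtain ⟨j, -, rfl⟩ := mem_image.mp hy
      have hijne : i ≠ j := fun h => hxy (by rw [h])
      have hDL : D ≤ l1dist (c i) (c j) := hclosest i j hijne
      have hL : 0 < l1dist (c i) (c j) := lt_of_lt_of_le hD hDL
      have hL'le : l1dist (g i) (g j) ≤ l1dist (c i) (c j) :=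
        Finset.sum_le_sum fun b' _ => collapse_lip _ _ _ _
      have hcoord : |c i b - c j b| ≤ |g i b - g j b| + |c i₀ b - c j₀ b| := by
        have := collapse_lower (c i₀ b) (c j₀ b) (c i b) (c j b)
        rw [abs_sub_comm (c j₀ b)] at this
        exact this
      by_cases hxy' : g i = g j
      · -- collapsed points coincide
        have : |g i b - g j b| = 0 := by rw [hxy', sub_self, abs_zero]
        have h1 : |c i b - c j b| / l1dist (c i) (c j) ≤ |c i₀ b - c j₀ b| / D := by
          apply div_le_div₀ (abs_nonneg _) (by linarith) hD hDL
        linarith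
      · have hL' : 0 < l1dist (g i) (g j) := l1dist_pos hxy'
        have hmem : |g i b - g j b| / l1dist (g i) (g j) ∈
            {v : ℝ | ∃ x ∈ C', ∃ y ∈ C', x ≠ y ∧ v = |x b - y b| / l1dist x y} :=
          ⟨g i, mem_image.mpr ⟨i, mem_univ _, rfl⟩,
           g j, mem_image.mpr ⟨j, mem_univ _, rfl⟩, hxy', rfl⟩
        have hle : |g i b - g j b| / l1dist (g i) (g j) ≤
            sSup {v : ℝ | ∃ x ∈ C', ∃ y ∈ C', x ≠ y ∧ v = |x b - y b| / l1dist x y} :=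
          le_csSup hbdd hmem
        have step1 : |c i b - c j b| / l1dist (c i) (c j) ≤
            |g i b - g j b| / l1dist (c i) (c j) + |c i₀ b - c j₀ b| / l1dist (c i) (c j) := by
          rw [← add_div]
          gcongr
        have step2 : |g i b - g j b| / l1dist (c i) (c j) ≤
            |g i b - g j b| / l1dist (g i) (g j) := by
          gcongr

        have step3 : |c i₀ b - c j₀ b| / l1dist (c i) (c j) ≤ |c i₀ b - c j₀ b| / D := by
          gcongr
        linarith
    calc Pfun (univ.image c)
        ≤ ∑ b : Fin d, (sSup {v : ℝ | ∃ x ∈ C', ∃ y ∈ C',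
            x ≠ y ∧ v = |x b - y b| / l1dist x y} + |c i₀ b - c j₀ b| / D) :=
          Finset.sum_le_sum fun b _ => key b
      _ = Pfun C' + ∑ b : Fin d, |c i₀ b - c j₀ b| / D := by
          rw [Finset.sum_add_distrib]; rfl
      _ = Pfun C' + 1 := by
          rw [← Finset.sum_div, ← l1dist, div_self hD.ne']
end

section
/- Let C ∈ ℝ^{n×d} be a matrix of n points with rank n, with singular value decomposition C = UΣVᵀ. Then for each coordinate b ∈ [d] and each pair i ≠ j with cᵢ ≠ cⱼ: |cᵢ^(b) − cⱼ^(b)|² / ‖cᵢ − cⱼ‖₂² ≤ Σ_{k ∈ [n]} (V_{b,k})², where V_{b,k} are entries of V restricted to its first n columns. -/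
open Matrix

theorem svd_coordinate_bound (n d : ℕ) (hnd : n ≤ d)
    (C : Matrix (Fin n) (Fin d) ℝ) (hrank : C.rank = n)
    (U : Matrix (Fin n) (Fin n) ℝ) (V : Matrix (Fin d) (Fin d) ℝ)
    (σ : Fin n → ℝ) (hσ : ∀ k, 0 < σ k)
    (hU : U * Uᵀ = 1 ∧ Uᵀ * U = 1) (hV : V * Vᵀ = 1 ∧ Vᵀ * V = 1)
    (hSVD : C = U * (Matrix.of fun (i : Fin n) (j : Fin d) =>
        if (i : ℕ) = (j : ℕ) then σ i else 0) * Vᵀ) :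
    ∀ (b : Fin d) (i j : Fin n), i ≠ j → C i ≠ C j →
      |C i b - C j b| ^ 2 / ∑ b' : Fin d, (C i b' - C j b') ^ 2
        ≤ ∑ k : Fin n, (V b (Fin.castLE hnd k)) ^ 2 := by
  intro b i j hij hCij
  set a : Fin n → ℝ := fun k => (U i k - U j k) * σ k with ha
  -- entrywise SVD formula
  have hentry : ∀ (p : Fin n) (b' : Fin d),
      C p b' = ∑ k : Fin n, U p k * σ k * V b' (Fin.castLE hnd k) := by
    intro p b'
    rw [hSVD]
    simp only [Matrix.mul_apply, Matrix.transpose_apply, Matrix.of_apply,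
      Finset.sum_mul]
    rw [Finset.sum_comm]
    refine Finset.sum_congr rfl fun k _ => ?_
    rw [Finset.sum_eq_single (Fin.castLE hnd k)]
    · simp
    · intro k' _ hk'
      have : (k : ℕ) ≠ (k' : ℕ) := by
        intro h
        exact hk' (by ext; simp [← h])
      simp [this]
    · simp
  have hrow : ∀ b' : Fin d,
      C i b' - C j b' = ∑ k : Fin n, a k * V b' (Fin.castLE hnd k) := by
    intro b'
    rw [hentry i b', hentry j b', ← Finset.sum_sub_distrib]
    refine Finset.sum_congr rfl fun k _ => ?_
    simp only [ha]
    ring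
  -- orthonormality of the first n columns of V
  have hVV : ∀ k k' : Fin n,
      (∑ b' : Fin d, V b' (Fin.castLE hnd k) * V b' (Fin.castLE hnd k'))
        = if k = k' then 1 else 0 := by
    intro k k'
    have h := congrFun (congrFun hV.2 (Fin.castLE hnd k)) (Fin.castLE hnd k')
    simp only [Matrix.mul_apply, Matrix.transpose_apply, Matrix.one_apply] at h
    rw [h]
    by_cases hkk : k = k'
    · simp [hkk]
    · have : Fin.castLE hnd k ≠ Fin.castLE hnd k' := by
        intro h'
        exact hkk (Fin.castLE_injective hnd h')
      simp [this, hkk]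
  -- norm identity
  have hnorm : ∑ b' : Fin d, (C i b' - C j b') ^ 2 = ∑ k : Fin n, a k ^ 2 := by
    calc ∑ b' : Fin d, (C i b' - C j b') ^ 2
        = ∑ b' : Fin d, ∑ k : Fin n, ∑ k' : Fin n,
            (a k * V b' (Fin.castLE hnd k)) * (a k' * V b' (Fin.castLE hnd k')) := by
          refine Finset.sum_congr rfl fun b' _ => ?_
          rw [hrow b', sq, Finset.sum_mul_sum]
      _ = ∑ k : Fin n, ∑ k' : Fin n, (a k * a k') *
            ∑ b' : Fin d, V b' (Fin.castLE hnd k) * V b' (Fin.castLE hnd k') := by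
          rw [Finset.sum_comm]
          refine Finset.sum_congr rfl fun k _ => ?_
          rw [Finset.sum_comm]
          refine Finset.sum_congr rfl fun k' _ => ?_
          rw [Finset.mul_sum]
          refine Finset.sum_congr rfl fun b' _ => ?_
          ring
      _ = ∑ k : Fin n, a k ^ 2 := by
          refine Finset.sum_congr rfl fun k _ => ?_
          rw [Finset.sum_eq_single k]
          · simp [hVV k k, sq]
          · intro k' _ hk'
            simp [hVV k k', (Ne.symm hk' : ¬ k = k')]
          · simp
  -- positivity of the denominator
  have hpos : 0 < ∑ b' : Fin d, (C i b' - C j b') ^ 2 := by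
    obtain ⟨b0, hb0⟩ : ∃ b0, C i b0 ≠ C j b0 := by
      by_contra h
      push_neg at h
      exact hCij (funext h)
    refine Finset.sum_pos' (fun b' _ => sq_nonneg _) ⟨b0, Finset.mem_univ _, ?_⟩
    exact pow_pos (abs_pos.mpr (sub_ne_zero.mpr hb0)) 2 |>.trans_eq (by rw [sq_abs])
  rw [div_le_iff₀ hpos, hnorm]
  -- Cauchy–Schwarz
  calc |C i b - C j b| ^ 2 = (∑ k : Fin n, a k * V b (Fin.castLE hnd k)) ^ 2 := by
        rw [sq_abs, hrow b]
    _ ≤ (∑ k : Fin n, a k ^ 2) * (∑ k : Fin n, (V b (Fin.castLE hnd k)) ^ 2) := by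
        exact Finset.sum_mul_sq_le_sq_mul_sq Finset.univ a _
    _ = (∑ k : Fin n, (V b (Fin.castLE hnd k)) ^ 2) * (∑ k : Fin n, a k ^ 2) := by
        ring
end

section
/- Let C = {c₁, …, cₙ} ⊆ ℝ^d be n distinct points. For each b ∈ [d], let p^(b) = max_{i ≠ j} |cᵢ^(b) − cⱼ^(b)|² / ‖cᵢ − cⱼ‖₂². Then 1 ≤ Σ_{b ∈ [d]} p^(b) ≤ n. -/
/-!
Write `V` for the span of the differences `cᵢ - cⱼ` and `P` for the orthogonal projection onto
`V`. For a difference `w ∈ V` we have `⟪e_b, w⟫ = ⟪P e_b, w⟫`, so by Cauchy–Schwarz every ratio in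
coordinate `b` is at most `‖P e_b‖²`; summing over an orthonormal basis gives
`∑_b ‖P e_b‖² = tr P = dim V ≤ n`. Conversely, for a single pair the ratios over all coordinates
sum to `1` by Parseval.
-/

open Finset

open scoped RealInnerProductSpace

namespace Submodule

variable {E : Type*} [NormedAddCommGroup E] [InnerProductSpace ℝ E]

theorem sq_inner_le_norm_starProjection_sq_mul_norm_sq (K : Submodule ℝ E)
    [K.HasOrthogonalProjection] (x : E) {w : E} (hw : w ∈ K) :
    ⟪x, w⟫ ^ 2 ≤ ‖K.starProjection x‖ ^ 2 * ‖w‖ ^ 2 := by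
  rw [← starProjection_eq_self_iff.mpr hw, ← inner_starProjection_left_eq_right,
    starProjection_eq_self_iff.mpr hw, ← mul_pow]
  exact pow_le_pow_left₀ (abs_nonneg _) (abs_real_inner_le_norm _ _) 2 |>.trans' (sq_abs _).ge

theorem norm_starProjection_sq_eq_inner (K : Submodule ℝ E) [K.HasOrthogonalProjection] (x : E) :
    ‖K.starProjection x‖ ^ 2 = ⟪x, K.starProjection x⟫ := by
  rw [real_inner_comm]
  exact (K.re_inner_starProjection_eq_normSq x).symm

theorem sum_norm_starProjection_sq [FiniteDimensional ℝ E] {ι : Type*} [Fintype ι]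
    (K : Submodule ℝ E) (e : OrthonormalBasis ι ℝ E) :
    ∑ b, ‖K.starProjection (e b)‖ ^ 2 = Module.finrank ℝ K := by
  have hproj : LinearMap.IsProj K (K.starProjection : E →ₗ[ℝ] E) := by
    simpa using LinearMap.IsIdempotentElem.isProj_range _
      (ContinuousLinearMap.IsIdempotentElem.toLinearMap K.isIdempotentElem_starProjection)
  simp_rw [norm_starProjection_sq_eq_inner]
  rw [← hproj.trace, LinearMap.trace_eq_sum_inner _ e]
  rfl

end Submodule

section CoordRatio

variable {ι κ E : Type*} [Fintype ι] [NormedAddCommGroup E] [InnerProductSpace ℝ E]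
  [FiniteDimensional ℝ E]

/-- The paper's `p^(b)` for the points `x i`, in the coordinates of the orthonormal basis `e`. -/
noncomputable def coordRatioSup (e : OrthonormalBasis ι ℝ E) (x : κ → E) (b : ι) : ℝ :=
  sSup {v : ℝ | ∃ i j : κ, i ≠ j ∧ v = ⟪e b, x i - x j⟫ ^ 2 / ‖x i - x j‖ ^ 2}

theorem coordRatio_le_norm_starProjection_sq (e : OrthonormalBasis ι ℝ E) (x : κ → E) (b : ι)
    (i j : κ) :
    ⟪e b, x i - x j⟫ ^ 2 / ‖x i - x j‖ ^ 2 ≤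
      ‖(vectorSpan ℝ (Set.range x)).starProjection (e b)‖ ^ 2 :=
  div_le_of_le_mul₀ (sq_nonneg _) (sq_nonneg _) <|
    Submodule.sq_inner_le_norm_starProjection_sq_mul_norm_sq _ _ <|
      vsub_mem_vectorSpan ℝ (Set.mem_range_self i) (Set.mem_range_self j)

theorem coordRatioSup_le_norm_starProjection_sq (e : OrthonormalBasis ι ℝ E) (x : κ → E)
    (b : ι) :
    coordRatioSup e x b ≤ ‖(vectorSpan ℝ (Set.range x)).starProjection (e b)‖ ^ 2 :=
  Real.sSup_le (by rintro _ ⟨i, j, -, rfl⟩; exact coordRatio_le_norm_starProjection_sq e x b i j)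
    (sq_nonneg _)

theorem sum_coordRatioSup_le_finrank (e : OrthonormalBasis ι ℝ E) (x : κ → E) :
    ∑ b, coordRatioSup e x b ≤ Module.finrank ℝ (vectorSpan ℝ (Set.range x)) :=
  calc ∑ b, coordRatioSup e x b
      ≤ ∑ b, ‖(vectorSpan ℝ (Set.range x)).starProjection (e b)‖ ^ 2 :=
        sum_le_sum fun b _ => coordRatioSup_le_norm_starProjection_sq e x b
    _ = Module.finrank ℝ (vectorSpan ℝ (Set.range x)) := Submodule.sum_norm_starProjection_sq _ e

theorem one_le_sum_coordRatioSup (e : OrthonormalBasis ι ℝ E) (x : κ → E) {i j : κ}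
    (hij : i ≠ j) (hx : x i ≠ x j) : 1 ≤ ∑ b, coordRatioSup e x b := by
  have hpos : 0 < ‖x i - x j‖ ^ 2 := by positivity [sub_ne_zero.mpr hx]
  calc (1 : ℝ) = ∑ b, ⟪e b, x i - x j⟫ ^ 2 / ‖x i - x j‖ ^ 2 := by
        rw [← sum_div, e.sum_sq_inner_right, div_self hpos.ne']
    _ ≤ ∑ b, coordRatioSup e x b := sum_le_sum fun b _ =>
        le_csSup ⟨_, by rintro _ ⟨i, j, -, rfl⟩; exact coordRatio_le_norm_starProjection_sq e x b i j⟩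
          ⟨i, j, hij, rfl⟩

theorem coordRatioSup_basisFun {n d : ℕ} (c : Fin n → Fin d → ℝ) (b : Fin d) :
    coordRatioSup (EuclideanSpace.basisFun (Fin d) ℝ) (fun i => WithLp.toLp 2 (c i)) b =
      sSup {v : ℝ | ∃ i j : Fin n, i ≠ j ∧
          v = |c i b - c j b| ^ 2 / ∑ b' : Fin d, (c i b' - c j b') ^ 2} := by
  simp only [coordRatioSup, EuclideanSpace.basisFun_inner, ← WithLp.toLp_sub,
    EuclideanSpace.real_norm_sq_eq, sq_abs]
  rfl

end CoordRatio

theorem sum_max_ratio_l2_bounds (n d : ℕ) (hn : 2 ≤ n) (c : Fin n → Fin d → ℝ)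
    (hinj : Function.Injective c) :
    1 ≤ (∑ b : Fin d, sSup {v : ℝ | ∃ i j : Fin n, i ≠ j ∧
          v = |c i b - c j b| ^ 2 / ∑ b' : Fin d, (c i b' - c j b') ^ 2}) ∧
    (∑ b : Fin d, sSup {v : ℝ | ∃ i j : Fin n, i ≠ j ∧
          v = |c i b - c j b| ^ 2 / ∑ b' : Fin d, (c i b' - c j b') ^ 2}) ≤ n := by
  obtain ⟨i, j, hij⟩ : ∃ i j : Fin n, i ≠ j := ⟨⟨0, by omega⟩, ⟨1, by omega⟩, by simp⟩
  have : Nonempty (Fin n) := ⟨i⟩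
  let x : Fin n → EuclideanSpace ℝ (Fin d) := fun i => WithLp.toLp 2 (c i)
  simp_rw [← coordRatioSup_basisFun]
  refine ⟨one_le_sum_coordRatioSup _ x hij fun h => hij (hinj (WithLp.toLp_injective 2 h)), ?_⟩
  have hdim := finrank_vectorSpan_range_add_one_le ℝ x
  rw [Fintype.card_fin] at hdim
  exact (sum_coordRatioSup_le_finrank _ x).trans (by exact_mod_cast (by omega : _ ≤ n))
end

section
/- Let a, b, q ∈ ℝ^d with ‖b − q‖₁ ≥ (1 + ε)‖a − q‖₁ for some ε ∈ (0,1), and let δ' ∈ (0,1). Define the good region Good(a,b,q) ⊆ [d] as the set of coordinates z such that min(a^(z), b^(z)) − (8/(εδ'))|a^(z) − b^(z)| ≤ q^(z) ≤ max(a^(z), b^(z)) + (8/(εδ'))|a^(z) − b^(z)|. Then Σ_{z ∈ Good(a,b,q)} |b^(z) − a^(z)| ≥ (13/16)‖b − a‖₁. -/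
/-!
A coordinate `z` outside the good region has `q z` at distance more than `C * |a z - b z|` from
`a z`, so `C` times the `ℓ₁`-mass of `b - a` outside the good region is at most `‖a - q‖₁`.
By the triangle inequality the ratio hypothesis gives `ε * ‖a - q‖₁ ≤ ‖b - a‖₁`, so that mass is at
most `‖b - a‖₁ / (ε * C)`, which for `C = 8 / (ε * δ')` is `δ' / 8 * ‖b - a‖₁ ≤ 3 / 16 * ‖b - a‖₁`.
-/

open Finset

section GoodRegion

variable {ι : Type*} [Fintype ι]

noncomputable def goodRegion (C : ℝ) (a b q : ι → ℝ) : Finset ι :=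
  univ.filter fun z =>
    min (a z) (b z) - C * |a z - b z| ≤ q z ∧ q z ≤ max (a z) (b z) + C * |a z - b z|

lemma mul_abs_sub_le_abs_sub_of_outside_margin {C x y t : ℝ}
    (ht : ¬(min x y - C * |x - y| ≤ t ∧ t ≤ max x y + C * |x - y|)) :
    C * |x - y| ≤ |x - t| := by
  rcases not_and_or.mp ht with hlow | hhigh
  · linarith [min_le_left x y, le_abs_self (x - t)]
  · linarith [le_max_left x y, neg_abs_le (x - t)]

lemma mul_sum_abs_sub_le_sum_goodRegion_add (C : ℝ) (a b q : ι → ℝ) :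
    C * ∑ z, |b z - a z| ≤ C * ∑ z ∈ goodRegion C a b q, |b z - a z| + ∑ z, |a z - q z| := by
  classical
  have hbad : C * ∑ z ∈ univ \ goodRegion C a b q, |b z - a z| ≤ ∑ z, |a z - q z| :=
    calc C * ∑ z ∈ univ \ goodRegion C a b q, |b z - a z|
        = ∑ z ∈ univ \ goodRegion C a b q, C * |a z - b z| := by
          simp only [mul_sum, abs_sub_comm]
      _ ≤ ∑ z ∈ univ \ goodRegion C a b q, |a z - q z| :=
          sum_le_sum fun z hz => mul_abs_sub_le_abs_sub_of_outside_margin <| by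
            simpa [goodRegion] using hz
      _ ≤ ∑ z, |a z - q z| := sum_le_sum_of_subset_of_nonneg (subset_univ _)
          fun z _ _ => abs_nonneg _
  rw [← sum_sdiff (subset_univ (goodRegion C a b q)), mul_add]
  linarith

lemma mul_sum_abs_sub_le_of_add_mul_le {ε : ℝ} {a b q : ι → ℝ}
    (h : (1 + ε) * ∑ z, |a z - q z| ≤ ∑ z, |b z - q z|) :
    ε * ∑ z, |a z - q z| ≤ ∑ z, |b z - a z| := by
  have htri : ∑ z, |b z - q z| ≤ ∑ z, |b z - a z| + ∑ z, |a z - q z| := by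
    rw [← sum_add_distrib]
    exact sum_le_sum fun z _ => abs_sub_le (b z) (a z) (q z)
  linarith

lemma one_sub_inv_mul_sum_le_sum_goodRegion {ε C : ℝ} (hε : 0 < ε) (hC : 0 < C)
    {a b q : ι → ℝ} (h : (1 + ε) * ∑ z, |a z - q z| ≤ ∑ z, |b z - q z|) :
    (1 - (ε * C)⁻¹) * ∑ z, |b z - a z| ≤ ∑ z ∈ goodRegion C a b q, |b z - a z| := by
  have hεC : 0 < ε * C := mul_pos hε hC
  have hcover := mul_sum_abs_sub_le_sum_goodRegion_add C a b q
  have hratio := mul_sum_abs_sub_le_of_add_mul_le h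
  have hscaled : ε * C * ∑ z, |b z - a z| ≤
      ε * C * ∑ z ∈ goodRegion C a b q, |b z - a z| + ∑ z, |b z - a z| := by
    have := mul_le_mul_of_nonneg_left hcover hε.le
    linarith
  calc (1 - (ε * C)⁻¹) * ∑ z, |b z - a z|
      = (ε * C)⁻¹ * (ε * C * ∑ z, |b z - a z| - ∑ z, |b z - a z|) := by field_simp
    _ ≤ (ε * C)⁻¹ * (ε * C * ∑ z ∈ goodRegion C a b q, |b z - a z|) := by
        gcongr; linarith
    _ = ∑ z ∈ goodRegion C a b q, |b z - a z| := by field_simp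

end GoodRegion

theorem good_region_large_l1_general (d : ℕ) (ε δ' : ℝ)
    (hε : 0 < ε) (hδ : 0 < δ') (hδ1 : δ' < 1)
    (a b q : Fin d → ℝ)
    (h : ∑ z, |b z - q z| ≥ (1 + ε) * ∑ z, |a z - q z|) :
    ∑ z ∈ Finset.univ.filter (fun z : Fin d =>
        min (a z) (b z) - 8 / (ε * δ') * |a z - b z| ≤ q z ∧
        q z ≤ max (a z) (b z) + 8 / (ε * δ') * |a z - b z|), |b z - a z|
      ≥ 13 / 16 * ∑ z, |b z - a z| := by
  have hgood := one_sub_inv_mul_sum_le_sum_goodRegion hε (by positivity : 0 < 8 / (ε * δ')) h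
  have hinv : (ε * (8 / (ε * δ')))⁻¹ = δ' / 8 := by field_simp
  rw [hinv] at hgood
  have hS : 0 ≤ ∑ z, |b z - a z| := sum_nonneg fun z _ => abs_nonneg _
  calc 13 / 16 * ∑ z, |b z - a z| ≤ (1 - δ' / 8) * ∑ z, |b z - a z| := by nlinarith
    _ ≤ _ := hgood

theorem good_region_large_l1 (d : ℕ) (ε δ' : ℝ)
    (hε : 0 < ε) (hε1 : ε < 1) (hδ : 0 < δ') (hδ1 : δ' < 1)
    (a b q : Fin d → ℝ) (haq : a ≠ q)
    (h : ∑ z, |b z - q z| ≥ (1 + ε) * ∑ z, |a z - q z|) :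
    ∑ z ∈ Finset.univ.filter (fun z : Fin d =>
        min (a z) (b z) - 8 / (ε * δ') * |a z - b z| ≤ q z ∧
        q z ≤ max (a z) (b z) + 8 / (ε * δ') * |a z - b z|), |b z - a z|
      ≥ 13 / 16 * ∑ z, |b z - a z| :=
  good_region_large_l1_general d ε δ' hε hδ hδ1 a b q h
end

section
/- Suppose g₁, w, g₁', w' ≥ 0 with g₁ ≥ (1 + ε/2)w for some ε ∈ (0,1), and the estimates satisfy (1 − ε/16)g₁ ≤ g₁' ≤ (1 + ε/16)g₁ and (1 − ε/16)w ≤ w' ≤ (1 + ε/16)w. Then g₁' − w' ≥ (3/4 − ε/16)(g₁ − w). -/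
theorem approximate_diff (ε g₁ w g₁' w' : ℝ)
    (hg₁ : 0 ≤ g₁) (hw : 0 ≤ w) (hg₁' : 0 ≤ g₁') (hw' : 0 ≤ w')
    (hε : 0 < ε) (hε1 : ε < 1)
    (h : g₁ ≥ (1 + ε / 2) * w)
    (h1 : (1 - ε / 16) * g₁ ≤ g₁') (h2 : g₁' ≤ (1 + ε / 16) * g₁)
    (h3 : (1 - ε / 16) * w ≤ w') (h4 : w' ≤ (1 + ε / 16) * w) :
    g₁' - w' ≥ (3 / 4 - ε / 16) * (g₁ - w) := by
  nlinarith [mul_nonneg hε.le hw, mul_le_mul_of_nonneg_left h hε.le, mul_nonneg (mul_nonneg hε.le hε.le) hw]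
end

section
/- Suppose b₁, b₂, g₁, g₂, b₁', b₂', g₁', g₂' ≥ 0 satisfy: (i) g₁ + b₁ ≥ (1+ε)(g₂ + b₂) with g₂ + b₂ > 0; (ii) (1 − εδ'/8)b₂ ≤ b₁ ≤ (1 + εδ'/8)b₂ and (1 − εδ'/8)b₂' ≤ b₁' ≤ (1 + εδ'/8)b₂'; (iii) g₂' + b₂' ≤ (1/δ')(g₂ + b₂) with g₂' + b₂' > 0; (iv) either [(1−ε/16)g₁ ≤ g₁' ≤ (1+ε/16)g₁ and (1−ε/16)g₂ ≤ g₂' ≤ (1+ε/16)g₂] or [g₁ > 7g₂, (1−ε/16)g₁ ≤ g₁' ≤ (1+ε/16)g₁, and g₁' ≥ 3g₂'], where 0 < ε < 1/4 and 0 < δ' < 1. Then (g₁' + b₁')/(g₂' + b₂') ≥ 1 + εδ'/4. -/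
theorem robust_estimate (ε δ' b₁ b₂ g₁ g₂ b₁' b₂' g₁' g₂' : ℝ)
    (hb₁ : 0 ≤ b₁) (hb₂ : 0 ≤ b₂) (hg₁ : 0 ≤ g₁) (hg₂ : 0 ≤ g₂)
    (hb₁' : 0 ≤ b₁') (hb₂' : 0 ≤ b₂') (hg₁' : 0 ≤ g₁') (hg₂' : 0 ≤ g₂')
    (hε : 0 < ε) (hε1 : ε < 1 / 4) (hδ : 0 < δ') (hδ1 : δ' < 1)
    (h1 : g₁ + b₁ ≥ (1 + ε) * (g₂ + b₂)) (h1' : 0 < g₂ + b₂)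
    (h2a : (1 - ε * δ' / 8) * b₂ ≤ b₁) (h2b : b₁ ≤ (1 + ε * δ' / 8) * b₂)
    (h2c : (1 - ε * δ' / 8) * b₂' ≤ b₁') (h2d : b₁' ≤ (1 + ε * δ' / 8) * b₂')
    (h3 : g₂' + b₂' ≤ (1 / δ') * (g₂ + b₂)) (h3' : 0 < g₂' + b₂')
    (h4 : ((1 - ε / 16) * g₁ ≤ g₁' ∧ g₁' ≤ (1 + ε / 16) * g₁ ∧
           (1 - ε / 16) * g₂ ≤ g₂' ∧ g₂' ≤ (1 + ε / 16) * g₂) ∨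
          (g₁ > 7 * g₂ ∧ (1 - ε / 16) * g₁ ≤ g₁' ∧ g₁' ≤ (1 + ε / 16) * g₁ ∧
           g₁' ≥ 3 * g₂')) :
    (g₁' + b₁') / (g₂' + b₂') ≥ 1 + ε * δ' / 4 := by
  rw [ge_iff_le, le_div_iff₀ h3']
  -- key fact 1 : δ' * b₂' ≤ g₂ + b₂
  have hδb : δ' * b₂' ≤ g₂ + b₂ := by
    have h := mul_le_mul_of_nonneg_left h3 hδ.le
    have heq : δ' * (1 / δ' * (g₂ + b₂)) = g₂ + b₂ := by field_simp
    nlinarith [mul_nonneg hδ.le hg₂']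
  -- key fact 2 : lower bound on g₁
  have hg1 : (1 + ε) * g₂ + 7 * ε / 8 * b₂ ≤ g₁ := by
    nlinarith [mul_nonneg (mul_nonneg hε.le (show (0:ℝ) ≤ 1 - δ' by linarith)) hb₂]
  -- bad-part comparison
  have hbad : (1 + ε * δ' / 4) * b₂' ≤ b₁' + 3 * ε / 8 * (g₂ + b₂) := by
    nlinarith [mul_le_mul_of_nonneg_left hδb (show (0:ℝ) ≤ 3 * ε / 8 by positivity)]
  rcases h4 with ⟨hA1, hA2, hA3, hA4⟩ | ⟨hB1, hB2, hB3, hB4⟩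
  · -- case A
    have s1 : (1 - ε / 16) * ((1 + ε) * g₂ + 7 * ε / 8 * b₂) ≤ g₁' :=
      le_trans (mul_le_mul_of_nonneg_left hg1 (by linarith)) hA1
    have s2 : (1 + ε * δ' / 4) * g₂' ≤ (1 + ε * δ' / 4) * ((1 + ε / 16) * g₂) :=
      mul_le_mul_of_nonneg_left hA4 (by positivity)
    have hkey : (1 + ε * δ' / 4) * ((1 + ε / 16) * g₂) + 3 * ε / 8 * (g₂ + b₂) ≤
        (1 - ε / 16) * ((1 + ε) * g₂ + 7 * ε / 8 * b₂) := by
      linarith [mul_nonneg (mul_nonneg hε.le hg₂) (show (0:ℝ) ≤ 1/4 - ε by linarith),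
        mul_nonneg (mul_nonneg (mul_nonneg hε.le hδ.le) hg₂) (show (0:ℝ) ≤ 1/4 - ε by linarith),
        mul_nonneg (mul_nonneg hε.le hb₂) (show (0:ℝ) ≤ 1/4 - ε by linarith),
        mul_nonneg hε.le hg₂, mul_nonneg hε.le hb₂,
        mul_nonneg (mul_nonneg hε.le hg₂) (show (0:ℝ) ≤ 1 - δ' by linarith),
        mul_nonneg (mul_nonneg hε.le hδ.le) hg₂]
    linarith [s1, s2, hkey, hbad]
  · -- case B
    have s1 : (1 - ε / 16) * ((1 + ε) * g₂ + 7 * ε / 8 * b₂) ≤ g₁' :=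
      le_trans (mul_le_mul_of_nonneg_left hg1 (by linarith)) hB2
    have s2 : (1 + ε * δ' / 4) * g₂' ≤ (1 + ε * δ' / 4) * (g₁' / 3) :=
      mul_le_mul_of_nonneg_left (by linarith) (by positivity)
    have hεδ : ε * δ' * g₁' ≤ 1 * g₁' :=
      mul_le_mul_of_nonneg_right
        (mul_le_one₀ (by linarith) hδ.le hδ1.le) hg₁'
    have hk1 : (1 + ε * δ' / 4) * (g₁' / 3) ≤ g₁' / 2 := by linarith
    have hk2 : 3 * ε / 8 * (g₂ + b₂) ≤ g₁' / 2 := by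
      linarith [mul_nonneg (mul_nonneg hε.le hg₂) (show (0:ℝ) ≤ 1/4 - ε by linarith),
        mul_nonneg (mul_nonneg hε.le hb₂) (show (0:ℝ) ≤ 1/4 - ε by linarith),
        mul_nonneg hε.le hg₂, mul_nonneg hε.le hb₂, hg₂]
    linarith [s1, s2, hk1, hk2, hbad]
end

section
/- Let p ≥ 1, ε ∈ (0, 1/(4p)), and a, b, q ∈ ℝ^d with q ∉ {a, b}. Define the truncated point q' coordinatewise by q'^(i) = truncate_{l^(i), u^(i)}(q^(i)), where for p > 1: l^(i) = a^(i) − (1/m(ε,p))(b^(i) − a^(i)), u^(i) = a^(i) + (1 + 1/m(ε,p))(b^(i) − a^(i)) with m(ε,p) = (1+ε)^{p/(p−1)} − 1, and for p = 1: l^(i) = min(a^(i), b^(i)), u^(i) = max(a^(i), b^(i)); truncate_{l,u}(x) = max(l, min(u, x)). If ‖a − q‖_p / ‖b − q‖_p ≥ 1 + ε, then ‖a − q'‖_p / ‖b − q'‖_p ≥ ‖a − q‖_p / ‖b − q‖_p. -/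
/-- The ℓ_p "norm" of a vector, `(Σ |x i|^p)^{1/p}` with real exponent. -/
noncomputable def lpnorm (p : ℝ) {d : ℕ} (x : Fin d → ℝ) : ℝ :=
  (∑ i, |x i| ^ p) ^ (1 / p)

/-- Truncation of `x` to the interval `[l, u]` (assuming `l ≤ u`). -/
noncomputable def truncate (l u x : ℝ) : ℝ := max l (min u x)

open Real

lemma rpow_convex_comb (p : ℝ) (hp : 1 ≤ p) (u v w1 w2 : ℝ) (hu : 0 ≤ u) (hv : 0 ≤ v)
    (h1 : 0 ≤ w1) (h2 : 0 ≤ w2) (hsum : w1 + w2 = 1) :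
    (w1 * u + w2 * v) ^ p ≤ w1 * u ^ p + w2 * v ^ p := by
  have := (convexOn_rpow hp).2 (Set.mem_Ici.mpr hu) (Set.mem_Ici.mpr hv) h1 h2 hsum
  simpa [smul_eq_mul] using this

lemma diff_mono (p : ℝ) (hp : 1 ≤ p) {x y t : ℝ} (hx : 0 ≤ x) (hxy : x ≤ y) (ht : 0 ≤ t) :
    (x + t) ^ p - x ^ p ≤ (y + t) ^ p - y ^ p := by
  rcases eq_or_lt_of_le (show x ≤ y + t by linarith) with h | h
  · have h1 : y = x := by linarith
    have h2 : t = 0 := by linarith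
    subst h1 h2; simp
  · have hden : 0 < y + t - x := by linarith
    have hθ0 : 0 ≤ t / (y + t - x) := div_nonneg ht hden.le
    have hθ1 : t / (y + t - x) ≤ 1 := by rw [div_le_one hden]; linarith
    have hcx := rpow_convex_comb p hp (y + t) x (t / (y + t - x)) (1 - t / (y + t - x))
      (by linarith) hx hθ0 (by linarith) (by ring)
    have hcy := rpow_convex_comb p hp (y + t) x (1 - t / (y + t - x)) (t / (y + t - x))
      (by linarith) hx (by linarith) hθ0 (by ring)
    have e1 : t / (y + t - x) * (y + t) + (1 - t / (y + t - x)) * x = x + t := by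
      field_simp; ring
    have e2 : (1 - t / (y + t - x)) * (y + t) + t / (y + t - x) * x = y := by
      field_simp; ring
    rw [e1] at hcx; rw [e2] at hcy
    linarith

lemma diff_scale (p : ℝ) (hp : 1 ≤ p) {K β t : ℝ} (hK : 1 ≤ K) (hβ : 0 ≤ β) (ht : 0 ≤ t) :
    (K * β + t) ^ p - (K * β) ^ p ≤ K ^ (p - 1) * ((β + t) ^ p - β ^ p) := by
  have hK0 : 0 < K := by linarith
  have hcx := rpow_convex_comb p hp (K * (β + t)) (K * β) (1/K) (1 - 1/K)
    (by positivity) (by positivity) (by positivity)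
    (by rw [sub_nonneg]; exact div_le_one_of_le₀ hK hK0.le) (by ring)
  have e1 : (1/K) * (K * (β + t)) + (1 - 1/K) * (K * β) = K * β + t := by
    field_simp; ring
  rw [e1] at hcx
  have e2 : (K * (β + t)) ^ p = K ^ p * (β + t) ^ p :=
    Real.mul_rpow hK0.le (by linarith)
  have e3 : (K * β) ^ p = K ^ p * β ^ p := Real.mul_rpow hK0.le hβ
  have e4 : K ^ (p - 1) * K = K ^ p := by
    rw [← Real.rpow_add_one hK0.ne' (p-1)]; ring_nf
  have hKp : 0 < K ^ (p-1) := Real.rpow_pos_of_pos hK0 _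
  rw [e2, e3] at hcx
  have key1 : (1/K) * (K ^ p * (β + t) ^ p) = K ^ (p-1) * (β + t) ^ p := by
    rw [← e4]; field_simp
  have key2 : (1 - 1/K) * (K ^ p * β ^ p) = K ^ p * β ^ p - K ^ (p-1) * β ^ p := by
    rw [← e4]; field_simp
  rw [e3]
  linarith

lemma m_pos {p ε : ℝ} (hp : 1 < p) (hε : 0 < ε) : 0 < (1 + ε) ^ (p / (p - 1)) - 1 := by
  have : 1 < (1 + ε) ^ (p / (p - 1)) :=
    (Real.one_lt_rpow_iff_of_pos (by linarith)).mpr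
      (Or.inl ⟨by linarith, div_pos (by linarith) (by linarith)⟩)
  linarith

lemma mpow {p ε : ℝ} (hp : 1 < p) (hε : 0 < ε) :
    ((1 + ε) ^ (p / (p - 1)) - 1 + 1) ^ (p - 1) = (1 + ε) ^ p := by
  rw [sub_add_cancel, ← Real.rpow_mul (by linarith : (0:ℝ) ≤ 1 + ε)]
  congr 1
  exact div_mul_cancel₀ p (by linarith : p - 1 ≠ 0)

/-- Per-coordinate lemma in the case `a ≤ b`. -/
lemma coord_le (p ε a b q l u q' : ℝ) (hp : 1 ≤ p) (hε : 0 < ε) (hab : a ≤ b)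
    (hl : l = if p = 1 then a else a - (1 / ((1 + ε) ^ (p / (p - 1)) - 1)) * (b - a))
    (hu : u = if p = 1 then b else a + (1 + 1 / ((1 + ε) ^ (p / (p - 1)) - 1)) * (b - a))
    (hq' : q' = max l (min u q)) :
    |b - q'| ≤ |b - q| ∧
      |a - q| ^ p - |a - q'| ^ p ≤ (1 + ε) ^ p * (|b - q| ^ p - |b - q'| ^ p) := by
  have hone : (1:ℝ) ≤ (1 + ε) ^ p := Real.one_le_rpow (by linarith) (by linarith)
  by_cases hp1 : p = 1
  · -- p = 1
    rw [if_pos hp1] at hl hu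
    rw [hl, hu] at hq'
    rw [hp1]
    simp only [Real.rpow_one]
    rcases le_total q a with h1 | h1
    · have hq'v : q' = a := by
        rw [hq', min_eq_right (le_trans h1 hab), max_eq_left h1]
      rw [hq'v]
      rw [abs_of_nonneg (by linarith : (0:ℝ) ≤ b - a),
        abs_of_nonneg (by linarith : (0:ℝ) ≤ b - q),
        abs_of_nonneg (by linarith : (0:ℝ) ≤ a - q)]
      constructor
      · linarith
      · simp only [sub_self, abs_zero]
        nlinarith
    · rcases le_total q b with h2 | h2
      · have hq'v : q' = q := by rw [hq', min_eq_right h2, max_eq_right h1]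
        rw [hq'v]
        exact ⟨le_refl _, by nlinarith [abs_nonneg (b - q)]⟩
      · have hq'v : q' = b := by rw [hq', min_eq_left h2, max_eq_right hab]
        rw [hq'v]
        rw [abs_of_nonpos (by linarith : b - q ≤ 0),
          abs_of_nonpos (by linarith : a - q ≤ 0),
          abs_of_nonpos (by linarith : a - b ≤ 0)]
        constructor
        · simp only [sub_self, abs_zero]; linarith
        · simp only [sub_self, abs_zero]; nlinarith
  · -- p > 1
    have hp1' : 1 < p := lt_of_le_of_ne hp (Ne.symm hp1)
    have hm : 0 < (1 + ε) ^ (p / (p - 1)) - 1 := m_pos hp1' hε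
    set m : ℝ := (1 + ε) ^ (p / (p - 1)) - 1 with hm_def
    have hmp : (m + 1) ^ (p - 1) = (1 + ε) ^ p := mpow hp1' hε
    rw [if_neg hp1] at hl hu
    have hnn1 : 0 ≤ (1 / m) * (b - a) := mul_nonneg (by positivity) (by linarith)
    have hnn2 : 0 ≤ (1 + 1 / m) * (b - a) := mul_nonneg (by positivity) (by linarith)
    have hlu : l ≤ u := by rw [hl, hu]; linarith
    have hla : l ≤ a := by rw [hl]; linarith
    have hbu : b ≤ u := by
      have : (a + (1 + 1 / m) * (b - a)) - b = (1/m) * (b - a) := by ring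
      rw [hu]; linarith
    rcases lt_or_ge q l with h1 | h1
    · -- q < l, clamp to l
      have hq'v : q' = l := by
        rw [hq', max_eq_left (le_trans (min_le_right u q) h1.le)]
      rw [hq'v]
      have hal : a - l = (1/m) * (b - a) := by rw [hl]; ring
      have hbl : b - l = (1 + 1/m) * (b - a) := by rw [hl]; ring
      have h0al : 0 ≤ a - l := by rw [hal]; exact hnn1
      have h0bl : 0 ≤ b - l := by rw [hbl]; exact hnn2
      have h0t : 0 ≤ l - q := by linarith
      constructor
      · rw [abs_of_nonneg h0bl, abs_of_nonneg (by linarith : (0:ℝ) ≤ b - q)]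
        linarith
      · rw [abs_of_nonneg h0al, abs_of_nonneg (by linarith : (0:ℝ) ≤ b - q),
          abs_of_nonneg (by linarith : (0:ℝ) ≤ a - q), abs_of_nonneg h0bl]
        have hmono := diff_mono p hp h0al (by linarith : a - l ≤ b - l) h0t
        have ea : a - l + (l - q) = a - q := by ring
        have eb : b - l + (l - q) = b - q := by ring
        rw [ea, eb] at hmono
        have hnn : (0:ℝ) ≤ (b - q) ^ p - (b - l) ^ p := by
          have := Real.rpow_le_rpow h0bl (by linarith : b - l ≤ b - q) (by linarith : (0:ℝ) ≤ p)
          linarith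
        nlinarith
    · rcases le_or_gt q u with h2 | h2
      · -- inside, q' = q
        have hq'v : q' = q := by rw [hq', min_eq_right h2, max_eq_right h1]
        rw [hq'v]
        exact ⟨le_refl _, by nlinarith [abs_nonneg (a-q), abs_nonneg (b-q)]⟩
      · -- q > u, clamp to u
        have hq'v : q' = u := by rw [hq', min_eq_left h2.le, max_eq_right hlu]
        rw [hq'v]
        have hub : u - b = (1/m) * (b - a) := by rw [hu]; ring
        have hua : u - a = (1 + 1/m) * (b - a) := by rw [hu]; ring
        have h0ub : 0 ≤ u - b := by rw [hub]; exact hnn1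
        have h0ua : 0 ≤ u - a := by linarith
        have h0t : 0 ≤ q - u := by linarith
        have hKb : (m + 1) * (u - b) = u - a := by
          rw [hub, hua]; field_simp
        constructor
        · rw [abs_of_nonpos (by linarith : b - u ≤ 0),
            abs_of_nonpos (by linarith : b - q ≤ 0)]
          linarith
        · rw [abs_of_nonpos (by linarith : b - u ≤ 0),
            abs_of_nonpos (by linarith : b - q ≤ 0),
            abs_of_nonpos (by linarith : a - u ≤ 0),
            abs_of_nonpos (by linarith : a - q ≤ 0)]
          have hscale := diff_scale p hp (by linarith : (1:ℝ) ≤ m + 1) h0ub h0t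
          rw [hKb] at hscale
          have ea : u - a + (q - u) = q - a := by ring
          have eb : u - b + (q - u) = q - b := by ring
          rw [ea, eb, hmp] at hscale
          have e1 : -(a - q) = q - a := by ring
          have e2 : -(a - u) = u - a := by ring
          have e3 : -(b - q) = q - b := by ring
          have e4 : -(b - u) = u - b := by ring
          rw [e1, e2, e3, e4]
          linarith

lemma clamp_comm {l u x : ℝ} (h : l ≤ u) : max l (min u x) = min u (max l x) := by
  rcases le_total x l with h1 | h1 <;> rcases le_total x u with h2 | h2 <;>
    simp [min_def, max_def] <;> split_ifs <;> linarith

/-- Per-coordinate lemma, general case. -/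
lemma coord (p ε a b q L U q' : ℝ) (hp : 1 ≤ p) (hε : 0 < ε)
    (hL : L = if p = 1 then min a b
        else a - (1 / ((1 + ε) ^ (p / (p - 1)) - 1)) * (b - a))
    (hU : U = if p = 1 then max a b
        else a + (1 + 1 / ((1 + ε) ^ (p / (p - 1)) - 1)) * (b - a))
    (hq' : q' = max (min L U) (min (max L U) q)) :
    |b - q'| ≤ |b - q| ∧
      |a - q| ^ p - |a - q'| ^ p ≤ (1 + ε) ^ p * (|b - q| ^ p - |b - q'| ^ p) := by
  rcases le_total a b with hab | hab
  · -- a ≤ b : here L ≤ U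
    have hLU : L ≤ U := by
      by_cases hp1 : p = 1
      · rw [hL, hU, if_pos hp1, if_pos hp1]; exact min_le_max
      · have hp1' : 1 < p := lt_of_le_of_ne hp (Ne.symm hp1)
        have hm : 0 < (1 + ε) ^ (p / (p - 1)) - 1 := m_pos hp1' hε
        have h1 : 0 ≤ (1 / ((1 + ε) ^ (p / (p - 1)) - 1)) * (b - a) :=
          mul_nonneg (by positivity) (by linarith)
        have h2 : 0 ≤ (1 + 1 / ((1 + ε) ^ (p / (p - 1)) - 1)) * (b - a) :=
          mul_nonneg (by positivity) (by linarith)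
        rw [hL, hU, if_neg hp1, if_neg hp1]; linarith
    rw [min_eq_left hLU, max_eq_right hLU] at hq'
    refine coord_le p ε a b q L U q' hp hε hab ?_ ?_ hq'
    · rw [hL, min_eq_left hab]
    · rw [hU, max_eq_right hab]
  · -- b ≤ a : negate everything
    have key := coord_le p ε (-a) (-b) (-q) (-(max L U)) (-(min L U)) (-q')
      hp hε (by linarith) ?_ ?_ ?_
    · obtain ⟨k1, k2⟩ := key
      constructor
      · have : |(-b) - (-q')| ≤ |(-b) - (-q)| := k1
        rw [show (-b) - (-q') = -(b - q') by ring, show (-b) - (-q) = -(b - q) by ring,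
          abs_neg, abs_neg] at this
        exact this
      · have : |(-a) - (-q)| ^ p - |(-a) - (-q')| ^ p
            ≤ (1 + ε) ^ p * (|(-b) - (-q)| ^ p - |(-b) - (-q')| ^ p) := k2
        rw [show (-a) - (-q) = -(a - q) by ring, show (-a) - (-q') = -(a - q') by ring,
          show (-b) - (-q) = -(b - q) by ring, show (-b) - (-q') = -(b - q') by ring,
          abs_neg, abs_neg, abs_neg, abs_neg] at this
        exact this
    · -- lower endpoint for (-a, -b) is -(max L U)
      by_cases hp1 : p = 1
      · have hmax : max L U = a := by
          rw [hL, hU, if_pos hp1, if_pos hp1, max_eq_right min_le_max, max_eq_left hab]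
        rw [if_pos hp1, hmax]
      · have hp1' : 1 < p := lt_of_le_of_ne hp (Ne.symm hp1)
        have hm : 0 < (1 + ε) ^ (p / (p - 1)) - 1 := m_pos hp1' hε
        have h1 : (1 / ((1 + ε) ^ (p / (p - 1)) - 1)) * (b - a) ≤ 0 :=
          mul_nonpos_of_nonneg_of_nonpos (by positivity) (by linarith)
        have h2 : (1 + 1 / ((1 + ε) ^ (p / (p - 1)) - 1)) * (b - a) ≤ 0 :=
          mul_nonpos_of_nonneg_of_nonpos (by positivity) (by linarith)
        have hUL : U ≤ L := by rw [hL, hU, if_neg hp1, if_neg hp1]; linarith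
        rw [if_neg hp1, max_eq_left hUL, hL, if_neg hp1]; ring
    · -- upper endpoint for (-a, -b) is -(min L U)
      by_cases hp1 : p = 1
      · have hmin : min L U = b := by
          rw [hL, hU, if_pos hp1, if_pos hp1, min_eq_left min_le_max, min_eq_right hab]
        rw [if_pos hp1, hmin]
      · have hp1' : 1 < p := lt_of_le_of_ne hp (Ne.symm hp1)
        have hm : 0 < (1 + ε) ^ (p / (p - 1)) - 1 := m_pos hp1' hε
        have h1 : (1 / ((1 + ε) ^ (p / (p - 1)) - 1)) * (b - a) ≤ 0 :=
          mul_nonpos_of_nonneg_of_nonpos (by positivity) (by linarith)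
        have h2 : (1 + 1 / ((1 + ε) ^ (p / (p - 1)) - 1)) * (b - a) ≤ 0 :=
          mul_nonpos_of_nonneg_of_nonpos (by positivity) (by linarith)
        have hUL : U ≤ L := by rw [hL, hU, if_neg hp1, if_neg hp1]; linarith
        rw [if_neg hp1, min_eq_right hUL, hU, if_neg hp1]; ring
    · -- the truncation point negates
      rw [hq', clamp_comm min_le_max, min_neg_neg, max_neg_neg]

theorem truncation_preserves_ratio (d : ℕ) (p ε : ℝ) (hp : 1 ≤ p)
    (hε : 0 < ε) (hε2 : ε < 1 / (4 * p))
    (a b q q' : Fin d → ℝ) (hqa : q ≠ a) (hqb : q ≠ b)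
    (L U : Fin d → ℝ)
    (hL : ∀ i, L i = if p = 1 then min (a i) (b i)
        else a i - (1 / ((1 + ε) ^ (p / (p - 1)) - 1)) * (b i - a i))
    (hU : ∀ i, U i = if p = 1 then max (a i) (b i)
        else a i + (1 + 1 / ((1 + ε) ^ (p / (p - 1)) - 1)) * (b i - a i))
    (hq' : ∀ i, q' i = truncate (min (L i) (U i)) (max (L i) (U i)) (q i))
    (hbq' : b ≠ q')
    (hratio : lpnorm p (fun i => a i - q i) / lpnorm p (fun i => b i - q i) ≥ 1 + ε) :
    lpnorm p (fun i => a i - q' i) / lpnorm p (fun i => b i - q' i)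
      ≥ lpnorm p (fun i => a i - q i) / lpnorm p (fun i => b i - q i) := by
  have hp0 : 0 < p := by linarith
  have hcoord : ∀ i, |b i - q' i| ≤ |b i - q i| ∧
      |a i - q i| ^ p - |a i - q' i| ^ p
        ≤ (1 + ε) ^ p * (|b i - q i| ^ p - |b i - q' i| ^ p) :=
    fun i => coord p ε (a i) (b i) (q i) (L i) (U i) (q' i) hp hε (hL i) (hU i)
      (by simpa [truncate] using hq' i)
  simp only [lpnorm] at hratio ⊢
  set SA := ∑ i, |a i - q i| ^ p with hSA_def
  set SB := ∑ i, |b i - q i| ^ p with hSB_def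
  set SA' := ∑ i, |a i - q' i| ^ p with hSA'_def
  set SB' := ∑ i, |b i - q' i| ^ p with hSB'_def
  have hSA0 : 0 ≤ SA := Finset.sum_nonneg fun i _ => Real.rpow_nonneg (abs_nonneg _) p
  have hSB0 : 0 ≤ SB := Finset.sum_nonneg fun i _ => Real.rpow_nonneg (abs_nonneg _) p
  have hSA'0 : 0 ≤ SA' := Finset.sum_nonneg fun i _ => Real.rpow_nonneg (abs_nonneg _) p
  have hSB'0 : 0 ≤ SB' := Finset.sum_nonneg fun i _ => Real.rpow_nonneg (abs_nonneg _) p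
  have hSBpos : 0 < SB := by
    obtain ⟨i, hi⟩ := Function.ne_iff.mp hqb
    exact Finset.sum_pos' (fun j _ => Real.rpow_nonneg (abs_nonneg _) p)
      ⟨i, Finset.mem_univ i,
        Real.rpow_pos_of_pos (abs_pos.mpr (sub_ne_zero.mpr (Ne.symm hi))) p⟩
  have hSB'pos : 0 < SB' := by
    obtain ⟨i, hi⟩ := Function.ne_iff.mp hbq'
    exact Finset.sum_pos' (fun j _ => Real.rpow_nonneg (abs_nonneg _) p)
      ⟨i, Finset.mem_univ i,
        Real.rpow_pos_of_pos (abs_pos.mpr (sub_ne_zero.mpr hi)) p⟩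
  have hSB'le : SB' ≤ SB :=
    Finset.sum_le_sum fun i _ => Real.rpow_le_rpow (abs_nonneg _) (hcoord i).1 hp0.le
  have hdiff : SA - SA' ≤ (1 + ε) ^ p * (SB - SB') := by
    have h := Finset.sum_le_sum (s := Finset.univ) (fun i _ => (hcoord i).2)
    calc SA - SA' = ∑ i, (|a i - q i| ^ p - |a i - q' i| ^ p) := by
          rw [Finset.sum_sub_distrib]
      _ ≤ ∑ i, (1 + ε) ^ p * (|b i - q i| ^ p - |b i - q' i| ^ p) := h
      _ = (1 + ε) ^ p * ∑ i, (|b i - q i| ^ p - |b i - q' i| ^ p) := by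
          rw [Finset.mul_sum]
      _ = (1 + ε) ^ p * (SB - SB') := by rw [Finset.sum_sub_distrib]
  have hSBp : (0:ℝ) < SB ^ (1/p) := Real.rpow_pos_of_pos hSBpos _
  have hstep : (1 + ε) * SB ^ (1/p) ≤ SA ^ (1/p) := (le_div_iff₀ hSBp).1 hratio
  have hSAge : (1 + ε) ^ p * SB ≤ SA := by
    have h := Real.rpow_le_rpow (by positivity) hstep hp0.le
    rw [Real.mul_rpow (by linarith) (Real.rpow_nonneg hSB0 _),
      ← Real.rpow_mul hSB0, one_div_mul_cancel hp0.ne', Real.rpow_one] at h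
    calc (1 + ε) ^ p * SB ≤ (SA ^ (1/p)) ^ p := h
      _ = SA := by rw [← Real.rpow_mul hSA0, one_div_mul_cancel hp0.ne', Real.rpow_one]
  have key : SA * SB' ≤ SA' * SB := by
    have h3 : SB * (SA - SA') ≤ SA * (SB - SB') :=
      calc SB * (SA - SA') ≤ SB * ((1 + ε) ^ p * (SB - SB')) :=
            mul_le_mul_of_nonneg_left hdiff hSB0
        _ = ((1 + ε) ^ p * SB) * (SB - SB') := by ring
        _ ≤ SA * (SB - SB') := mul_le_mul_of_nonneg_right hSAge (by linarith)
    nlinarith [h3]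
  rw [ge_iff_le, div_le_div_iff₀ hSBp (Real.rpow_pos_of_pos hSB'pos _)]
  rw [← Real.mul_rpow hSA0 hSB'0, ← Real.mul_rpow hSA'0 hSB0]
  exact Real.rpow_le_rpow (by positivity) key (by positivity)
end
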